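/- arXiv:2510.00755 — 2 statements merged into one kernel-verified Lean document; each statement's English description precedes it below -/
import Mathlib

section
/- Fix integers h ≥ 2, l ≥ 1, k' ≥ 0 and set n = h + l and s₀ = h + l(k'+1). For any z' ∈ ℝ^l, the singleton {(0,z')} ⊂ ℝⁿ has vanishing Grushin s₀-capacity: there is a bounded open set U₁ ⊆ ℝⁿ containing (0,z') such that inf{∫_{ℝⁿ} |Xψ|^{s₀} dx : ψ ∈ C_c^∞(U₁), ψ(0,z') ≥ 1} = 0; equivalently, for every ε > 0 there exists ψ ∈ C_c^∞(U₁) with ψ ≥ 1 on {(0,z')} and ∫_{ℝⁿ} |Xψ|^{s₀} dx < ε. -/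
open MeasureTheory Real Set Filter Topology

noncomputable section

/-- Points of `ℝⁿ`. -/
abbrev Pt (n : ℕ) := Fin n → ℝ

/-- Partial derivative `∂_{x_j} u (x)`. -/
def pd {n : ℕ} (j : Fin n) (u : Pt n → ℝ) (x : Pt n) : ℝ :=
  fderiv ℝ u x (Pi.single j 1)

/-- Action of the vector field with coefficient functions `h` on a function `u`:
`(Xu)(x) = ∑ j, h_j(x) ∂_{x_j} u(x)`. -/
def vfApply {n : ℕ} (h : Pt n → Pt n) (u : Pt n → ℝ) (x : Pt n) : ℝ :=
  ∑ j, h x j * pd j u x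

/-- Formal adjoint: `X*φ = -∑ j ∂_{x_j}(h_j φ)`. -/
def vfAdjApply {n : ℕ} (h : Pt n → Pt n) (φ : Pt n → ℝ) (x : Pt n) : ℝ :=
  -∑ j, pd j (fun y => h y j * φ y) x

/-- Commutator of two vector fields. -/
def vfComm {n : ℕ} (X Y : Pt n → Pt n) : Pt n → Pt n :=
  fun x i => ∑ j, (X x j * pd j (fun y => Y y i) x - Y x j * pd j (fun y => X y i) x)

/-- Commutators of length exactly `k` of the family `X`. -/
def commSet {n m : ℕ} (X : Fin m → Pt n → Pt n) : ℕ → Set (Pt n → Pt n)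
  | 0 => ∅
  | 1 => Set.range X
  | (k+2) => {W | ∃ i, ∃ Z ∈ commSet X (k+1), W = vfComm (X i) Z}

/-- `V_j(x)`: span of values at `x` of commutators of length at most `j`. -/
def Vspace {n m : ℕ} (X : Fin m → Pt n → Pt n) (j : ℕ) (x : Pt n) : Submodule ℝ (Pt n) :=
  Submodule.span ℝ {v | ∃ k, 1 ≤ k ∧ k ≤ j ∧ ∃ Z ∈ commSet X k, v = Z x}

/-- Hörmander's condition for a system of smooth vector fields on `U`. -/
def Hormander {n m : ℕ} (X : Fin m → Pt n → Pt n) (U : Set (Pt n)) : Prop :=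
  (∀ i, ContDiffOn ℝ (⊤ : ℕ∞) (X i) U) ∧
  ∃ i₀ : ℕ, 1 ≤ i₀ ∧ ∀ x ∈ U, Vspace X i₀ x = ⊤

/-- The degree of nonholonomy `i(x)`. -/
def degNH {n m : ℕ} (X : Fin m → Pt n → Pt n) (x : Pt n) : ℕ :=
  sInf {j | Vspace X j x = ⊤}

/-- Pointwise homogeneous dimension `v(x)`. -/
def ptHomDim {n m : ℕ} (X : Fin m → Pt n → Pt n) (x : Pt n) : ℕ :=
  ∑ j ∈ Finset.Icc 1 (degNH X x),
    j * (Module.finrank ℝ (Vspace X j x) - Module.finrank ℝ (Vspace X (j-1) x))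

/-- Generalized Métivier index of `Ω`: `ṽ = max_{x ∈ closure Ω} v(x)`. -/
def metivier {n m : ℕ} (X : Fin m → Pt n → Pt n) (Ω : Set (Pt n)) : ℕ :=
  sSup (ptHomDim X '' closure Ω)

/-- `x` is a regular point, and equiregularity of a set. -/
def Equiregular {n m : ℕ} (X : Fin m → Pt n → Pt n) (Ω : Set (Pt n)) : Prop :=
  ∀ x ∈ Ω, ∀ j, 1 ≤ j → j ≤ degNH X x →
    ∃ W ∈ 𝓝 x, ∀ y ∈ W, Module.finrank ℝ (Vspace X j y) = Module.finrank ℝ (Vspace X j x)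

/-- A test function on `V`: smooth with compact support contained in `V`. -/
def testFun {n : ℕ} (V : Set (Pt n)) (φ : Pt n → ℝ) : Prop :=
  ContDiff ℝ (⊤ : ℕ∞) φ ∧ HasCompactSupport φ ∧ tsupport φ ⊆ V

/-- `g` is the weak derivative of `u` along the vector field `h` on `V`. -/
def IsWeakXDerivOn {n : ℕ} (h : Pt n → Pt n) (V : Set (Pt n)) (u g : Pt n → ℝ) : Prop :=
  ∀ φ : Pt n → ℝ, testFun V φ →
    ∫ x in V, g x * φ x = ∫ x in V, u x * vfAdjApply h φ x

/-- Euclidean norm of a vector in `ℝ^m`. -/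
def eNorm {m : ℕ} (v : Fin m → ℝ) : ℝ := Real.sqrt (∑ i, v i ^ 2)

/-- `|Xψ|(x)`. -/
def XgradNorm {n m : ℕ} (X : Fin m → Pt n → Pt n) (ψ : Pt n → ℝ) (x : Pt n) : ℝ :=
  eNorm (fun i => vfApply (X i) ψ x)

/-- `cap_s(S) = 0`: the `s`-capacity of `S` relative to some bounded open `U₁ ⊆ U` vanishes. -/
def HasCapZero {n m : ℕ} (X : Fin m → Pt n → Pt n) (s : ℝ) (U S : Set (Pt n)) : Prop :=
  ∃ U₁ : Set (Pt n), IsOpen U₁ ∧ Bornology.IsBounded U₁ ∧ U₁ ⊆ U ∧ S ⊆ U₁ ∧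
    ∀ ε > 0, ∃ ψ : Pt n → ℝ, testFun U₁ ψ ∧ (∀ x ∈ S, 1 ≤ ψ x) ∧
      ∫ x, (XgradNorm X ψ x) ^ s < ε

/-- `u ∈ W^{1,p}_X(V)` with weak `X`-gradient `Xu`. -/
def MemW1pX {n m : ℕ} (X : Fin m → Pt n → Pt n) (p : ℝ) (V : Set (Pt n))
    (u : Pt n → ℝ) (Xu : Fin m → Pt n → ℝ) : Prop :=
  MemLp u (ENNReal.ofReal p) (volume.restrict V) ∧
  ∀ i, IsWeakXDerivOn (X i) V u (Xu i) ∧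
    MemLp (Xu i) (ENNReal.ofReal p) (volume.restrict V)

/-- `u ∈ W^{1,p}_{X,loc}(V)` with weak `X`-gradient `Xu`. -/
def MemW1pXLoc {n m : ℕ} (X : Fin m → Pt n → Pt n) (p : ℝ) (V : Set (Pt n))
    (u : Pt n → ℝ) (Xu : Fin m → Pt n → ℝ) : Prop :=
  (∀ i, IsWeakXDerivOn (X i) V u (Xu i)) ∧
  ∀ K : Set (Pt n), IsCompact K → K ⊆ V →
    MemLp u (ENNReal.ofReal p) (volume.restrict K) ∧
    ∀ i, MemLp (Xu i) (ENNReal.ofReal p) (volume.restrict K)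

/-- `u` is a weak solution of `∑ X_i^* A_i(x,u,Xu) = B(x,u,Xu)` in `V`. -/
def IsWeakSolution {n m : ℕ} (X : Fin m → Pt n → Pt n) (p : ℝ)
    (A : Pt n → ℝ → (Fin m → ℝ) → Fin m → ℝ) (B : Pt n → ℝ → (Fin m → ℝ) → ℝ)
    (V : Set (Pt n)) (u : Pt n → ℝ) (Xu : Fin m → Pt n → ℝ) : Prop :=
  MemW1pXLoc X p V u Xu ∧
  LocallyIntegrableOn (fun x => B x (u x) (fun i => Xu i x)) V volume ∧
  ∀ φ : Pt n → ℝ, testFun V φ →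
    ∫ x in V, ((∑ i, A x (u x) (fun j => Xu j x) i * vfApply (X i) φ x)
      - B x (u x) (fun j => Xu j x) * φ x) = 0

/-- Structure condition (SC1). -/
def SC1 {n m : ℕ} (A : Pt n → ℝ → (Fin m → ℝ) → Fin m → ℝ)
    (p a : ℝ) (b e d g : Pt n → ℝ) (Ω : Set (Pt n)) : Prop :=
  ∀ x ∈ Ω, ∀ (t : ℝ) (ξ : Fin m → ℝ),
    eNorm (A x t ξ) ≤ a * eNorm ξ ^ (p - 1) + b x * |t| ^ (p - 1) + e x ∧
    eNorm ξ ^ p - d x * |t| ^ p - g x ≤ ∑ i, ξ i * A x t ξ i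

/-- Structure condition (SC2). -/
def SC2 {n m : ℕ} (B : Pt n → ℝ → (Fin m → ℝ) → ℝ)
    (p c₀ : ℝ) (c d f : Pt n → ℝ) (Ω : Set (Pt n)) : Prop :=
  ∀ x ∈ Ω, ∀ (t : ℝ) (ξ : Fin m → ℝ),
    |B x t ξ| ≤ c₀ * eNorm ξ ^ p + c x * eNorm ξ ^ (p - 1) + d x * |t| ^ (p - 1) + f x

/-- The integrability classes of the coefficients. -/
def CoeffCond {n : ℕ} (p vT ε : ℝ) (b c d e f g : Pt n → ℝ) (Ω : Set (Pt n)) : Prop :=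
  (∀ᵐ x ∂(volume.restrict Ω),
      0 ≤ b x ∧ 0 ≤ c x ∧ 0 ≤ d x ∧ 0 ≤ e x ∧ 0 ≤ f x ∧ 0 ≤ g x) ∧
  (∀ k ∈ ({b, e} : Set (Pt n → ℝ)),
    (p < vT → MemLp k (ENNReal.ofReal (vT / (p - 1))) (volume.restrict Ω)) ∧
    (p = vT → MemLp k (ENNReal.ofReal (vT / (vT - 1 - ε))) (volume.restrict Ω))) ∧
  MemLp c (ENNReal.ofReal (vT / (1 - ε))) (volume.restrict Ω) ∧
  (∀ k ∈ ({d, f, g} : Set (Pt n → ℝ)),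
    MemLp k (ENNReal.ofReal (vT / (p - ε))) (volume.restrict Ω))

/-- A subunit path of speed `δ` joining `x` to `y` inside `U`. -/
def SubunitPath {n m : ℕ} (X : Fin m → Pt n → Pt n) (U : Set (Pt n)) (δ : ℝ)
    (x y : Pt n) : Prop :=
  ∃ φ : ℝ → Pt n, (∀ t ∈ Icc (0:ℝ) 1, φ t ∈ U) ∧ φ 0 = x ∧ φ 1 = y ∧
    (∃ K : NNReal, LipschitzOnWith K φ (Icc 0 1)) ∧
    ∃ a : Fin m → ℝ → ℝ, ∀ᵐ t ∂(volume.restrict (Icc (0:ℝ) 1)),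
      HasDerivAt φ (∑ i, a i t • X i (φ t)) t ∧ ∑ i, (a i t) ^ 2 ≤ δ ^ 2

/-- The subunit (Carnot–Carathéodory) metric. -/
def subunitDist {n m : ℕ} (X : Fin m → Pt n → Pt n) (U : Set (Pt n)) (x y : Pt n) : ℝ :=
  sInf {δ : ℝ | 0 < δ ∧ SubunitPath X U δ x y}

/-- Subunit ball. -/
def subunitBall {n m : ℕ} (X : Fin m → Pt n → Pt n) (U : Set (Pt n)) (x₀ : Pt n) (R : ℝ) :
    Set (Pt n) :=
  {y | subunitDist X U x₀ y < R}

/-- `L^q(V)` norm of `f` (as a real number). -/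
def lpNormOn {n : ℕ} (f : Pt n → ℝ) (q : ℝ) (V : Set (Pt n)) : ℝ :=
  (eLpNorm f (ENNReal.ofReal q) (volume.restrict V)).toReal

end

/-- The Grushin vector fields on `ℝ^{h+l}`: `X_i = ∂_{x_i}` for `i < h` and
`X_{h+j} = |x|^{k'} ∂_{z_j}` for `j < l`. -/
noncomputable def grushinVF (h l k' : ℕ) : Fin (h + l) → Pt (h + l) → Pt (h + l) :=
  fun i y j =>
    if (i : ℕ) < h then (if j = i then 1 else 0)
    else (if j = i then (Real.sqrt (∑ r : Fin h, (y (Fin.castAdd l r)) ^ 2)) ^ k' else 0)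

/-- `u` is a weak solution of the Grushin equation `P_{k'} u = f` on `V`,
with weak Grushin gradient `Xu`. -/
def IsGrushinWeakSol (h l k' : ℕ) (V : Set (Pt (h + l))) (u : Pt (h + l) → ℝ)
    (Xu : Fin (h + l) → Pt (h + l) → ℝ) (f : Pt (h + l) → ℝ) : Prop :=
  MemW1pXLoc (grushinVF h l k') 2 V u Xu ∧
  ∀ φ : Pt (h + l) → ℝ, testFun V φ →
    ∫ x in V, (∑ i, Xu i x * vfApply (grushinVF h l k' i) φ x) = ∫ x in V, f x * φ x


namespace GrushinAux

open Finset in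
/-- If `u` is locally constant at `x`, all partial derivatives vanish. -/
lemma pd_of_eventuallyEq_const {n : ℕ} {u : Pt n → ℝ} {x : Pt n} {c : ℝ}
    (hu : u =ᶠ[𝓝 x] fun _ => c) (j : Fin n) : pd j u x = 0 := by
  unfold pd
  rw [hu.fderiv_eq]
  simp

/-- The basic one-dimensional bump function. -/
def bb : ContDiffBump (0:ℝ) := ⟨1, 2, one_pos, one_lt_two⟩

lemma bb_zero {t : ℝ} (ht : 2 ≤ |t|) : bb t = 0 :=
  bb.zero_of_le_dist (by show (2:ℝ) ≤ dist t 0; simpa [Real.dist_eq] using ht)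

lemma bb_one {t : ℝ} (ht : |t| ≤ 1) : bb t = 1 :=
  bb.one_of_mem_closedBall (by show t ∈ Metric.closedBall (0:ℝ) 1; simpa [Real.dist_eq, Metric.mem_closedBall] using ht)

variable (h l k' : ℕ) (z' : Fin l → ℝ)

/-- The center point `(0, z')`. -/
def pp : Pt (h + l) := Fin.append (fun _ => (0:ℝ)) z'

/-- The anisotropic dilation coefficients. -/
def cc (k : ℕ) (j : Fin (h + l)) : ℝ :=
  if (j : ℕ) < h then 4 ^ k else 4 ^ (k * (k' + 1))

lemma cc_pos (k : ℕ) (j : Fin (h + l)) : 0 < cc h l k' k j := by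
  unfold cc; split <;> positivity

lemma cc_mono (k : ℕ) (j : Fin (h + l)) : 4 * cc h l k' k j ≤ cc h l k' (k + 1) j := by
  unfold cc; split
  · rw [pow_succ]; ring_nf; exact le_rfl
  · have h1 : (k + 1) * (k' + 1) = k * (k' + 1) + (k' + 1) := by ring
    rw [h1, pow_add]
    have h2 : (4:ℝ) ≤ 4 ^ (k' + 1) := le_self_pow₀ (by norm_num) (Nat.succ_ne_zero _)
    have h3 : (0:ℝ) < 4 ^ (k * (k' + 1)) := by positivity
    nlinarith

lemma cc_one_le (j : Fin (h + l)) : (1:ℝ) ≤ cc h l k' 0 j := by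
  unfold cc; split <;> simp

/-- The factor functions. -/
noncomputable def gfac (k : ℕ) (j : Fin (h + l)) : Pt (h + l) → ℝ :=
  fun y => bb (cc h l k' k j * (y j - pp h l z' j))

/-- The bump at scale `k`. -/
noncomputable def Φf (k : ℕ) : Pt (h + l) → ℝ := fun y => ∏ j, gfac h l k' z' k j y

/-- The closed box where `Φf k` is supported. -/
def Qb (k : ℕ) : Set (Pt (h + l)) :=
  Set.pi Set.univ fun j =>
    Icc (pp h l z' j - 2 / cc h l k' k j) (pp h l z' j + 2 / cc h l k' k j)

lemma mem_Qb_iff {k : ℕ} {x : Pt (h + l)} :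
    x ∈ Qb h l k' z' k ↔ ∀ j, |x j - pp h l z' j| ≤ 2 / cc h l k' k j := by
  simp only [Qb, Set.mem_univ_pi, ← Real.closedBall_eq_Icc, Metric.mem_closedBall,
    Real.dist_eq]

/-- The open box where `Φf k` is identically one. -/
def Pin (k : ℕ) : Set (Pt (h + l)) :=
  {y | ∀ j, |y j - pp h l z' j| < 1 / cc h l k' k j}

lemma isOpen_Pin (k : ℕ) : IsOpen (Pin h l k' z' k) := by
  have : Pin h l k' z' k = ⋂ j, {y : Pt (h + l) | |y j - pp h l z' j| < 1 / cc h l k' k j} := by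
    ext y; simp [Pin]
  rw [this]
  exact isOpen_iInter_of_finite fun j =>
    isOpen_lt (((continuous_apply j).sub continuous_const).abs) continuous_const

lemma Qb_succ_subset_Pin (k : ℕ) : Qb h l k' z' (k + 1) ⊆ Pin h l k' z' k := by
  intro x hx j
  have hx' := (mem_Qb_iff h l k' z').1 hx j
  have hc := cc_pos h l k' k j
  have hm := cc_mono h l k' k j
  have h1 : 2 / cc h l k' (k + 1) j ≤ 2 / (4 * cc h l k' k j) :=
    div_le_div_of_nonneg_left (by norm_num) (by positivity) hm
  have h2 : 2 / (4 * cc h l k' k j) < 1 / cc h l k' k j := by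
    rw [div_lt_div_iff₀ (by positivity) hc]; nlinarith
  exact lt_of_le_of_lt (le_trans hx' h1) h2

lemma Pin_subset_Qb (k : ℕ) : Pin h l k' z' k ⊆ Qb h l k' z' k := by
  intro x hx
  rw [mem_Qb_iff]
  intro j
  have hc := cc_pos h l k' k j
  have := hx j
  have h1 : 1 / cc h l k' k j ≤ 2 / cc h l k' k j := by
    apply div_le_div_of_nonneg_right (by norm_num) hc.le
  exact le_trans this.le h1

lemma Qb_anti {k m : ℕ} (hkm : k ≤ m) : Qb h l k' z' m ⊆ Qb h l k' z' k := by
  induction m, hkm using Nat.le_induction with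
  | base => exact subset_rfl
  | succ m hm ih =>
    exact subset_trans (subset_trans (Qb_succ_subset_Pin h l k' z' m)
      (Pin_subset_Qb h l k' z' m)) ih

lemma Φf_eq_one_on_Pin {k : ℕ} {x : Pt (h + l)} (hx : x ∈ Pin h l k' z' k) :
    Φf h l k' z' k x = 1 := by
  unfold Φf
  apply Finset.prod_eq_one
  intro j _
  unfold gfac
  apply bb_one
  have hc := cc_pos h l k' k j
  rw [abs_mul, abs_of_pos hc]
  have := hx j
  calc cc h l k' k j * |x j - pp h l z' j| ≤ cc h l k' k j * (1 / cc h l k' k j) := by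
        exact mul_le_mul_of_nonneg_left this.le hc.le
    _ = 1 := by field_simp

lemma pd_Φf_zero_of_Pin {k : ℕ} {x : Pt (h + l)} (hx : x ∈ Pin h l k' z' k)
    (j : Fin (h + l)) : pd j (Φf h l k' z' k) x = 0 := by
  apply pd_of_eventuallyEq_const (c := 1)
  filter_upwards [(isOpen_Pin h l k' z' k).mem_nhds hx] with y hy
  exact Φf_eq_one_on_Pin h l k' z' hy

lemma Φf_zero_of_notQb {k : ℕ} {x : Pt (h + l)} (hx : x ∉ Qb h l k' z' k) :
    Φf h l k' z' k x = 0 := by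
  rw [mem_Qb_iff] at hx
  push_neg at hx
  obtain ⟨j₀, hj₀⟩ := hx
  unfold Φf
  apply Finset.prod_eq_zero (Finset.mem_univ j₀)
  unfold gfac
  apply bb_zero
  have hc := cc_pos h l k' k j₀
  rw [abs_mul, abs_of_pos hc]
  calc (2:ℝ) = cc h l k' k j₀ * (2 / cc h l k' k j₀) := by field_simp
    _ ≤ cc h l k' k j₀ * |x j₀ - pp h l z' j₀| :=
        mul_le_mul_of_nonneg_left hj₀.le hc.le

lemma pd_Φf_zero_of_notQb {k : ℕ} {x : Pt (h + l)} (hx : x ∉ Qb h l k' z' k)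
    (j : Fin (h + l)) : pd j (Φf h l k' z' k) x = 0 := by
  rw [mem_Qb_iff] at hx
  push_neg at hx
  obtain ⟨j₀, hj₀⟩ := hx
  apply pd_of_eventuallyEq_const (c := 0)
  have hopen : IsOpen {y : Pt (h + l) | 2 / cc h l k' k j₀ < |y j₀ - pp h l z' j₀|} :=
    isOpen_lt continuous_const (((continuous_apply j₀).sub continuous_const).abs)
  filter_upwards [hopen.mem_nhds hj₀] with y hy
  apply Φf_zero_of_notQb
  rw [mem_Qb_iff]
  push_neg
  exact ⟨j₀, hy⟩

lemma contDiff_Φf (k : ℕ) : ContDiff ℝ (⊤ : ℕ∞) (Φf h l k' z' k) := by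
  apply contDiff_prod
  intro j _
  unfold gfac
  exact bb.contDiff.comp
    ((contDiff_const.mul (((ContinuousLinearMap.proj j : Pt (h + l) →L[ℝ] ℝ).contDiff).sub
      contDiff_const)))

lemma hasFDerivAt_gfac (k : ℕ) (j : Fin (h + l)) (x : Pt (h + l)) :
    HasFDerivAt (gfac h l k' z' k j)
      ((deriv bb (cc h l k' k j * (x j - pp h l z' j)) * cc h l k' k j) •
        (ContinuousLinearMap.proj j : Pt (h + l) →L[ℝ] ℝ)) x := by
  have h1 : HasFDerivAt (fun y : Pt (h + l) => cc h l k' k j * (y j - pp h l z' j))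
      (cc h l k' k j • (ContinuousLinearMap.proj j : Pt (h + l) →L[ℝ] ℝ)) x :=
    (((ContinuousLinearMap.proj j : Pt (h + l) →L[ℝ] ℝ).hasFDerivAt).sub_const
      (pp h l z' j)).const_mul (cc h l k' k j)
  have h2 : HasDerivAt bb (deriv bb (cc h l k' k j * (x j - pp h l z' j)))
      (cc h l k' k j * (x j - pp h l z' j)) :=
    (((bb.contDiff (n := (1:ℕ∞))).differentiable (by simp)) _).hasDerivAt
  have := h2.comp_hasFDerivAt x h1
  rwa [smul_smul] at this

lemma pd_Φf_eq (k : ℕ) (j : Fin (h + l)) (x : Pt (h + l)) :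
    pd j (Φf h l k' z' k) x =
      (∏ r ∈ Finset.univ.erase j, gfac h l k' z' k r x) *
        (deriv bb (cc h l k' k j * (x j - pp h l z' j)) * cc h l k' k j) := by
  classical
  have hD := HasFDerivAt.finset_prod (u := (Finset.univ : Finset (Fin (h + l))))
    (fun i _ => hasFDerivAt_gfac h l k' z' k i x)
  have hΦ : Φf h l k' z' k = (∏ i ∈ (Finset.univ : Finset (Fin (h + l))), gfac h l k' z' k i ·) := rfl
  unfold pd
  rw [hΦ, hD.fderiv]
  rw [ContinuousLinearMap.sum_apply]
  rw [Finset.sum_eq_single j]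
  · simp
  · intro b _ hbj
    simp [Pi.single_eq_of_ne hbj]
  · simp

lemma gfac_nonneg (k : ℕ) (j : Fin (h + l)) (x : Pt (h + l)) :
    0 ≤ gfac h l k' z' k j x := bb.nonneg' _

lemma gfac_le_one (k : ℕ) (j : Fin (h + l)) (x : Pt (h + l)) :
    gfac h l k' z' k j x ≤ 1 := bb.le_one

lemma pd_Φf_bound {Bd : ℝ} (hBd : ∀ t, |deriv bb t| ≤ Bd) (k : ℕ) (j : Fin (h + l))
    (x : Pt (h + l)) : |pd j (Φf h l k' z' k) x| ≤ Bd * cc h l k' k j := by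
  rw [pd_Φf_eq, abs_mul]
  have hc := cc_pos h l k' k j
  have h1 : |∏ r ∈ Finset.univ.erase j, gfac h l k' z' k r x| ≤ 1 := by
    rw [abs_of_nonneg (Finset.prod_nonneg fun r _ => gfac_nonneg h l k' z' k r x)]
    exact Finset.prod_le_one (fun r _ => gfac_nonneg h l k' z' k r x)
      (fun r _ => gfac_le_one h l k' z' k r x)
  have h2 : |deriv (bb : ℝ → ℝ) (cc h l k' k j * (x j - pp h l z' j)) * cc h l k' k j|
      ≤ Bd * cc h l k' k j := by
    rw [abs_mul, abs_of_pos hc]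
    exact mul_le_mul_of_nonneg_right (hBd _) hc.le
  have h3 : (0:ℝ) ≤ |deriv (bb : ℝ → ℝ) (cc h l k' k j * (x j - pp h l z' j)) * cc h l k' k j| :=
    abs_nonneg _
  calc _ ≤ 1 * (Bd * cc h l k' k j) := mul_le_mul h1 h2 h3 one_pos.le
    _ = Bd * cc h l k' k j := one_mul _

/-- The weight `|x|` appearing in the Grushin fields. -/
noncomputable def ww : Pt (h + l) → ℝ :=
  fun y => Real.sqrt (∑ r : Fin h, (y (Fin.castAdd l r)) ^ 2)

lemma vfApply_grushin_eq (i : Fin (h + l)) (u : Pt (h + l) → ℝ) (x : Pt (h + l)) :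
    vfApply (grushinVF h l k' i) u x
      = (if (i : ℕ) < h then 1 else ww h l x ^ k') * pd i u x := by
  unfold vfApply grushinVF ww
  rw [Finset.sum_eq_single i]
  · split <;> simp
  · intro b _ hbi
    split <;> simp [hbi]
  · simp

lemma pp_castAdd (r : Fin h) : pp h l z' (Fin.castAdd l r) = 0 := by
  unfold pp
  exact Fin.append_left _ _ r

lemma cc_castAdd (k : ℕ) (r : Fin h) : cc h l k' k (Fin.castAdd l r) = 4 ^ k := by
  unfold cc
  rw [if_pos (by simpa using r.isLt)]

lemma ww_bound {k : ℕ} {x : Pt (h + l)} (hx : x ∈ Qb h l k' z' k) :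
    ww h l x * 4 ^ k ≤ 2 * Real.sqrt h := by
  have h4 : (0:ℝ) < 4 ^ k := by positivity
  have h1 : ∀ r : Fin h, (x (Fin.castAdd l r)) ^ 2 ≤ (2 / 4 ^ k) ^ 2 := by
    intro r
    have := (mem_Qb_iff h l k' z').1 hx (Fin.castAdd l r)
    rw [pp_castAdd, cc_castAdd, sub_zero] at this
    rw [← sq_abs]
    exact pow_le_pow_left₀ (abs_nonneg _) this 2
  have h2 : ∑ r : Fin h, (x (Fin.castAdd l r)) ^ 2 ≤ (h : ℝ) * (2 / 4 ^ k) ^ 2 := by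
    calc ∑ r : Fin h, (x (Fin.castAdd l r)) ^ 2 ≤ ∑ _r : Fin h, (2 / 4 ^ k) ^ 2 :=
          Finset.sum_le_sum fun r _ => h1 r
      _ = (h : ℝ) * (2 / 4 ^ k) ^ 2 := by
          rw [Finset.sum_const, Finset.card_univ, Fintype.card_fin, nsmul_eq_mul]
  have h3 : ww h l x ≤ Real.sqrt h * (2 / 4 ^ k) := by
    unfold ww
    calc Real.sqrt (∑ r : Fin h, (x (Fin.castAdd l r)) ^ 2)
        ≤ Real.sqrt ((h : ℝ) * (2 / 4 ^ k) ^ 2) := Real.sqrt_le_sqrt h2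
      _ = Real.sqrt h * (2 / 4 ^ k) := by
          rw [Real.sqrt_mul (Nat.cast_nonneg h), Real.sqrt_sq (by positivity)]
  calc ww h l x * 4 ^ k ≤ (Real.sqrt h * (2 / 4 ^ k)) * 4 ^ k :=
        mul_le_mul_of_nonneg_right h3 h4.le
    _ = 2 * Real.sqrt h := by field_simp

lemma ww_nonneg (x : Pt (h + l)) : 0 ≤ ww h l x := Real.sqrt_nonneg _

lemma coef_cc_bound {k : ℕ} {x : Pt (h + l)} (hx : x ∈ Qb h l k' z' k) (i : Fin (h + l)) :
    (if (i : ℕ) < h then 1 else ww h l x ^ k') * cc h l k' k i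
      ≤ (1 + (2 * Real.sqrt h) ^ k') * 4 ^ k := by
  have hW : (0:ℝ) ≤ (2 * Real.sqrt h) ^ k' := by positivity
  have h4 : (0:ℝ) < 4 ^ k := by positivity
  unfold cc
  split
  · rw [one_mul]
    nlinarith
  · have key : ww h l x ^ k' * 4 ^ (k * (k' + 1)) ≤ (2 * Real.sqrt h) ^ k' * 4 ^ k := by
      have hsplit : (4:ℝ) ^ (k * (k' + 1)) = (4 ^ k) ^ k' * 4 ^ k := by
        rw [← pow_mul, ← pow_add]
        congr 1 <;> ring
      rw [hsplit, ← mul_assoc, ← mul_pow]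
      have hw0 : 0 ≤ ww h l x * 4 ^ k := mul_nonneg (ww_nonneg h l x) h4.le
      exact mul_le_mul_of_nonneg_right
        (pow_le_pow_left₀ hw0 (ww_bound h l k' z' hx) k') h4.le
    nlinarith

lemma vf_Φf_bound {Bd : ℝ} (hBd0 : 0 ≤ Bd) (hBd : ∀ t, |deriv bb t| ≤ Bd)
    {k : ℕ} {x : Pt (h + l)} (hx : x ∈ Qb h l k' z' k) (i : Fin (h + l)) :
    |vfApply (grushinVF h l k' i) (Φf h l k' z' k) x|
      ≤ (Bd * (1 + (2 * Real.sqrt h) ^ k')) * 4 ^ k := by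
  rw [vfApply_grushin_eq, abs_mul]
  have hco : (0:ℝ) ≤ if (i : ℕ) < h then 1 else ww h l x ^ k' := by
    split
    · norm_num
    · exact pow_nonneg (ww_nonneg h l x) k'
  rw [abs_of_nonneg hco]
  calc (if (i : ℕ) < h then 1 else ww h l x ^ k') * |pd i (Φf h l k' z' k) x|
      ≤ (if (i : ℕ) < h then 1 else ww h l x ^ k') * (Bd * cc h l k' k i) :=
        mul_le_mul_of_nonneg_left (pd_Φf_bound h l k' z' hBd k i x) hco
    _ = Bd * ((if (i : ℕ) < h then 1 else ww h l x ^ k') * cc h l k' k i) := by ring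
    _ ≤ Bd * ((1 + (2 * Real.sqrt h) ^ k') * 4 ^ k) :=
        mul_le_mul_of_nonneg_left (coef_cc_bound h l k' z' hx i) hBd0
    _ = (Bd * (1 + (2 * Real.sqrt h) ^ k')) * 4 ^ k := by ring

lemma eNorm_le_of_forall {m : ℕ} {v : Fin m → ℝ} {M : ℝ} (hM : 0 ≤ M)
    (hv : ∀ i, |v i| ≤ M) : eNorm v ≤ Real.sqrt m * M := by
  unfold eNorm
  have h1 : ∑ i, v i ^ 2 ≤ (m : ℝ) * M ^ 2 := by
    calc ∑ i, v i ^ 2 ≤ ∑ _i : Fin m, M ^ 2 :=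
          Finset.sum_le_sum fun i _ => by
            rw [← sq_abs]
            exact pow_le_pow_left₀ (abs_nonneg _) (hv i) 2
      _ = (m : ℝ) * M ^ 2 := by
          rw [Finset.sum_const, Finset.card_univ, Fintype.card_fin, nsmul_eq_mul]
  calc Real.sqrt (∑ i, v i ^ 2) ≤ Real.sqrt ((m : ℝ) * M ^ 2) := Real.sqrt_le_sqrt h1
    _ = Real.sqrt m * M := by rw [Real.sqrt_mul (Nat.cast_nonneg m), Real.sqrt_sq hM]

lemma eNorm_const_mul {m : ℕ} (a : ℝ) (v : Fin m → ℝ) :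
    eNorm (fun i => a * v i) = |a| * eNorm v := by
  unfold eNorm
  rw [← Real.sqrt_sq_eq_abs, ← Real.sqrt_mul (sq_nonneg a)]
  congr 1
  rw [Finset.mul_sum]
  refine Finset.sum_congr rfl fun i _ => by ring

lemma eNorm_zero'' {m : ℕ} : eNorm (fun _ : Fin m => (0:ℝ)) = 0 := by
  simp [eNorm]

lemma XgradNorm_nonneg {n m : ℕ} (X : Fin m → Pt n → Pt n) (ψ : Pt n → ℝ) (x : Pt n) :
    0 ≤ XgradNorm X ψ x := Real.sqrt_nonneg _

lemma Xgrad_Φf_bound {Bd : ℝ} (hBd0 : 0 ≤ Bd) (hBd : ∀ t, |deriv bb t| ≤ Bd)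
    {k : ℕ} {x : Pt (h + l)} (hx : x ∈ Qb h l k' z' k) :
    XgradNorm (grushinVF h l k') (Φf h l k' z' k) x
      ≤ (Real.sqrt (h + l : ℕ) * (Bd * (1 + (2 * Real.sqrt h) ^ k'))) * 4 ^ k := by
  unfold XgradNorm
  rw [mul_assoc]
  exact eNorm_le_of_forall (by positivity) (fun i => vf_Φf_bound h l k' z' hBd0 hBd hx i)

lemma prod_cc (m : ℕ) : ∏ j, cc h l k' m j = 4 ^ (m * (h + l * (k' + 1))) := by
  rw [Fin.prod_univ_add (f := fun j : Fin (h + l) => cc h l k' m j)]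
  have h1 : ∀ r : Fin h, cc h l k' m (Fin.castAdd l r) = 4 ^ m :=
    fun r => cc_castAdd h l k' m r
  have h2 : ∀ r : Fin l, cc h l k' m (Fin.natAdd h r) = 4 ^ (m * (k' + 1)) := by
    intro r
    unfold cc
    rw [if_neg (by simp)]
  rw [Finset.prod_congr rfl fun r _ => h1 r, Finset.prod_congr rfl fun r _ => h2 r,
    Finset.prod_const, Finset.prod_const, Finset.card_univ, Finset.card_univ,
    Fintype.card_fin, Fintype.card_fin, ← pow_mul, ← pow_mul, ← pow_add]
  congr 1
  ring

lemma measurableSet_Qb (m : ℕ) : MeasurableSet (Qb h l k' z' m) :=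
  MeasurableSet.univ_pi fun _ => measurableSet_Icc

lemma isCompact_Qb (m : ℕ) : IsCompact (Qb h l k' z' m) :=
  isCompact_univ_pi fun _ => isCompact_Icc

lemma isClosed_Qb (m : ℕ) : IsClosed (Qb h l k' z' m) :=
  isClosed_set_pi fun _ _ => isClosed_Icc

lemma vol_Qb (m : ℕ) :
    (volume (Qb h l k' z' m)).toReal
      = 4 ^ (h + l) / 4 ^ (m * (h + l * (k' + 1))) := by
  unfold Qb
  rw [volume_pi_pi, ENNReal.toReal_prod]
  have h1 : ∀ j : Fin (h + l),
      (volume (Icc (pp h l z' j - 2 / cc h l k' m j)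
        (pp h l z' j + 2 / cc h l k' m j))).toReal = 4 / cc h l k' m j := by
    intro j
    have hc := cc_pos h l k' m j
    have heq : pp h l z' j + 2 / cc h l k' m j - (pp h l z' j - 2 / cc h l k' m j)
        = 4 / cc h l k' m j := by ring
    rw [Real.volume_Icc, heq, ENNReal.toReal_ofReal (by positivity)]
  rw [Finset.prod_congr rfl fun j _ => h1 j, Finset.prod_div_distrib,
    Finset.prod_const, Finset.card_univ, Fintype.card_fin, prod_cc]

lemma Φf_pp (k : ℕ) : Φf h l k' z' k (pp h l z') = 1 := by
  apply Φf_eq_one_on_Pin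
  intro j
  have hc := cc_pos h l k' k j
  simp only [sub_self, abs_zero]
  positivity

end GrushinAux

open GrushinAux

/-- **Vanishing Grushin `s₀`-capacity of points on the singular set**: for any
`z' ∈ ℝ^l`, the singleton `{(0,z')}` has zero Grushin `s₀`-capacity, `s₀ = h + l(k'+1)`. -/
theorem grushin_capacity_point_zero
    (h l k' : ℕ) (hh : 2 ≤ h) (hl : 1 ≤ l) (z' : Fin l → ℝ) :
    ∃ U₁ : Set (Pt (h + l)), IsOpen U₁ ∧ Bornology.IsBounded U₁ ∧
      Fin.append (fun _ => (0:ℝ)) z' ∈ U₁ ∧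
      ∀ ε : ℝ, 0 < ε → ∃ ψ : Pt (h + l) → ℝ, testFun U₁ ψ ∧
        1 ≤ ψ (Fin.append (fun _ => (0:ℝ)) z') ∧
        ∫ x, (XgradNorm (grushinVF h l k') ψ x) ^ (((h + l * (k' + 1) : ℕ)) : ℝ) < ε := by
  classical
  have hbd_cont : Continuous (deriv (bb : ℝ → ℝ)) :=
    (bb.contDiff (n := (⊤ : ℕ∞))).continuous_deriv (by exact_mod_cast le_top)
  obtain ⟨Bd, hBd'⟩ := (bb.hasCompactSupport.deriv).exists_bound_of_continuous hbd_cont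
  have hBd : ∀ t, |deriv (bb : ℝ → ℝ) t| ≤ Bd := by
    intro t; simpa [Real.norm_eq_abs] using hBd' t
  have hBd0 : 0 ≤ Bd := le_trans (abs_nonneg _) (hBd 0)
  set s : ℕ := h + l * (k' + 1) with hs
  have hs2 : 2 ≤ s := le_trans hh (Nat.le_add_right h _)
  set C3 : ℝ := Real.sqrt (h + l : ℕ) * (Bd * (1 + (2 * Real.sqrt h) ^ k')) with hC3
  have hC30 : 0 ≤ C3 := by positivity
  set C6 : ℝ := C3 ^ s * 4 ^ (h + l) with hC6
  have hC60 : 0 ≤ C6 := by rw [hC6]; positivity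
  refine ⟨Metric.ball (pp h l z') 1, Metric.isOpen_ball, Metric.isBounded_ball,
    Metric.mem_ball_self one_pos, ?_⟩
  intro ε hε
  obtain ⟨N, hN⟩ := exists_nat_gt (max 1 (C6 / ε))
  have hN1 : 1 ≤ N := by
    have h1 : (1:ℝ) < N := lt_of_le_of_lt (le_max_left _ _) hN
    exact_mod_cast h1.le
  have hNpos : (0:ℝ) < N := by
    have : (0:ℕ) < N := hN1
    exact_mod_cast this
  have hNC6 : C6 / ε < N := lt_of_le_of_lt (le_max_right _ _) hN
  have hNi0 : (0:ℝ) ≤ (N:ℝ)⁻¹ := by positivity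
  have hNi1 : (N:ℝ)⁻¹ ≤ 1 := by
    rw [inv_le_one_iff₀]
    right
    exact_mod_cast hN1
  set ψ : Pt (h + l) → ℝ :=
    fun y => (N:ℝ)⁻¹ * ∑ k ∈ Finset.range N, Φf h l k' z' (k + 1) y with hψ
  have hψ0 : ∀ x, x ∉ Qb h l k' z' 1 → ψ x = 0 := by
    intro x hx
    have hz : ∀ k ∈ Finset.range N, Φf h l k' z' (k + 1) x = 0 := by
      intro k _
      apply Φf_zero_of_notQb
      intro hxk
      exact hx (Qb_anti h l k' z' (by omega) hxk)
    rw [hψ]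
    simp only []
    rw [Finset.sum_eq_zero hz, mul_zero]
  have hsupp : tsupport ψ ⊆ Qb h l k' z' 1 :=
    closure_minimal (Function.support_subset_iff'.2 hψ0) (isClosed_Qb h l k' z' 1)
  have hQball : Qb h l k' z' 1 ⊆ Metric.ball (pp h l z') 1 := by
    intro x hx
    rw [Metric.mem_ball]
    have hd : dist x (pp h l z') ≤ 1 / 2 := by
      rw [dist_pi_le_iff (by norm_num)]
      intro j
      rw [Real.dist_eq]
      have h1 := (mem_Qb_iff h l k' z').1 hx j
      have h2 : (4:ℝ) ≤ cc h l k' 1 j := by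
        have h3 := cc_mono h l k' 0 j
        have h4 := cc_one_le h l k' j
        nlinarith
      have h3 : 2 / cc h l k' 1 j ≤ 1 / 2 := by
        rw [div_le_div_iff₀ (by linarith) (by norm_num)]
        linarith
      linarith
    linarith
  have htest : testFun (Metric.ball (pp h l z') 1) ψ := by
    refine ⟨?_, ?_, hsupp.trans hQball⟩
    · exact contDiff_const.mul (ContDiff.sum fun k _ => contDiff_Φf h l k' z' (k + 1))
    · exact HasCompactSupport.intro (isCompact_Qb h l k' z' 1) hψ0
  have hval : ψ (pp h l z') = 1 := by
    rw [hψ]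
    simp only [Φf_pp]
    rw [Finset.sum_const, Finset.card_range, nsmul_eq_mul, mul_one]
    field_simp
  have hdiffΦ : ∀ (k : ℕ) (x : Pt (h + l)), DifferentiableAt ℝ (Φf h l k' z' k) x :=
    fun k x => ((contDiff_Φf h l k' z' k).differentiable (by simp)).differentiableAt
  have pd_psi : ∀ (j : Fin (h + l)) (x : Pt (h + l)),
      pd j ψ x = (N:ℝ)⁻¹ * ∑ k ∈ Finset.range N, pd j (Φf h l k' z' (k + 1)) x := by
    intro j x
    simp only [pd]
    rw [hψ]
    rw [fderiv_const_mul (DifferentiableAt.fun_sum fun k _ => hdiffΦ (k + 1) x) ((N:ℝ)⁻¹)]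
    rw [fderiv_fun_sum fun k _ => hdiffΦ (k + 1) x]
    simp [Finset.mul_sum]
  have hpdQ : ∀ (k : ℕ) (j : Fin (h + l)) (x : Pt (h + l)),
      pd j (Φf h l k' z' k) x ≠ 0 → x ∈ Qb h l k' z' k := by
    intro k j x hpd
    by_contra hx
    exact hpd (pd_Φf_zero_of_notQb h l k' z' hx j)
  set RHS : Pt (h + l) → ℝ := fun x => ∑ k ∈ Finset.range N,
      (Qb h l k' z' (k + 1)).indicator (fun _ => ((N:ℝ)⁻¹ * (C3 * 4 ^ (k + 1))) ^ s) x
    with hRHS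
  have hRHS_term_nn : ∀ (x : Pt (h + l)), ∀ k ∈ Finset.range N,
      0 ≤ (Qb h l k' z' (k + 1)).indicator (fun _ => ((N:ℝ)⁻¹ * (C3 * 4 ^ (k + 1))) ^ s) x :=
    fun x k _ => Set.indicator_nonneg (fun _ _ => by positivity) x
  have key : ∀ x, (XgradNorm (grushinVF h l k') ψ x) ^ s ≤ RHS x := by
    intro x
    by_cases hact : ∃ k ∈ Finset.range N, ∃ j, pd j (Φf h l k' z' (k + 1)) x ≠ 0
    · obtain ⟨k₀, hk₀, j₀, hj₀⟩ := hact
      have hxQ : x ∈ Qb h l k' z' (k₀ + 1) := hpdQ _ _ _ hj₀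
      have hxP : x ∉ Pin h l k' z' (k₀ + 1) :=
        fun hP => hj₀ (pd_Φf_zero_of_Pin h l k' z' hP j₀)
      have huniq : ∀ k ∈ Finset.range N, k ≠ k₀ →
          ∀ j : Fin (h + l), pd j (Φf h l k' z' (k + 1)) x = 0 := by
        intro k _ hk j
        rcases lt_or_gt_of_ne hk with hlt | hgt
        · apply pd_Φf_zero_of_Pin h l k' z' _ j
          exact Qb_succ_subset_Pin h l k' z' (k + 1)
            (Qb_anti h l k' z' (by omega) hxQ)
        · by_contra hne
          have hxQk : x ∈ Qb h l k' z' (k + 1) := hpdQ _ _ _ hne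
          exact hxP (Qb_succ_subset_Pin h l k' z' (k₀ + 1)
            (Qb_anti h l k' z' (by omega) hxQk))
      have hpd_psi_i : ∀ j : Fin (h + l),
          pd j ψ x = (N:ℝ)⁻¹ * pd j (Φf h l k' z' (k₀ + 1)) x := by
        intro j
        rw [pd_psi j x, Finset.sum_eq_single k₀]
        · intro k hkmem hkne
          exact huniq k hkmem hkne j
        · intro hk
          exact absurd hk₀ hk
      have hXg : XgradNorm (grushinVF h l k') ψ x
          = (N:ℝ)⁻¹ * XgradNorm (grushinVF h l k') (Φf h l k' z' (k₀ + 1)) x := by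
        unfold XgradNorm
        have hvf : (fun i => vfApply (grushinVF h l k' i) ψ x)
            = fun i => (N:ℝ)⁻¹ * vfApply (grushinVF h l k' i) (Φf h l k' z' (k₀ + 1)) x := by
          funext i
          rw [vfApply_grushin_eq h l k', vfApply_grushin_eq h l k', hpd_psi_i]
          ring
        rw [hvf, eNorm_const_mul, abs_of_nonneg hNi0]
      have hb : XgradNorm (grushinVF h l k') ψ x ≤ (N:ℝ)⁻¹ * (C3 * 4 ^ (k₀ + 1)) := by
        rw [hXg]
        have hXb := Xgrad_Φf_bound h l k' z' hBd0 hBd hxQ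
        rw [← hC3] at hXb
        exact mul_le_mul_of_nonneg_left hXb hNi0
      calc (XgradNorm (grushinVF h l k') ψ x) ^ s
          ≤ ((N:ℝ)⁻¹ * (C3 * 4 ^ (k₀ + 1))) ^ s :=
            pow_le_pow_left₀ (XgradNorm_nonneg _ _ _) hb s
        _ = (Qb h l k' z' (k₀ + 1)).indicator
              (fun _ => ((N:ℝ)⁻¹ * (C3 * 4 ^ (k₀ + 1))) ^ s) x :=
            (Set.indicator_of_mem hxQ (fun _ => ((N:ℝ)⁻¹ * (C3 * 4 ^ (k₀ + 1))) ^ s)).symm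
        _ ≤ RHS x := Finset.single_le_sum (hRHS_term_nn x) hk₀
    · push_neg at hact
      have hpd0 : ∀ j : Fin (h + l), pd j ψ x = 0 := by
        intro j
        rw [pd_psi j x, Finset.sum_eq_zero (fun k hk => hact k hk j), mul_zero]
      have hvf0 : (fun i => vfApply (grushinVF h l k' i) ψ x) = fun _ => (0:ℝ) := by
        funext i
        rw [vfApply_grushin_eq h l k', hpd0, mul_zero]
      have hX0 : XgradNorm (grushinVF h l k') ψ x = 0 := by
        unfold XgradNorm
        rw [hvf0]
        exact eNorm_zero''
      rw [hX0, zero_pow (by omega : s ≠ 0)]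
      exact Finset.sum_nonneg (hRHS_term_nn x)
  have hRHS_int_term : ∀ k ∈ Finset.range N,
      Integrable ((Qb h l k' z' (k + 1)).indicator
        (fun _ => ((N:ℝ)⁻¹ * (C3 * 4 ^ (k + 1))) ^ s)) := by
    intro k _
    rw [integrable_indicator_iff (measurableSet_Qb h l k' z' (k + 1))]
    exact integrableOn_const ((isCompact_Qb h l k' z' (k + 1)).measure_lt_top.ne)
  have hRHS_int : Integrable RHS := by
    rw [hRHS]
    exact integrable_finset_sum _ hRHS_int_term
  have hint : ∫ x, (XgradNorm (grushinVF h l k') ψ x) ^ s ≤ ∫ x, RHS x :=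
    integral_mono_of_nonneg
      (Filter.Eventually.of_forall fun x => pow_nonneg (XgradNorm_nonneg _ _ _) s)
      hRHS_int (Filter.Eventually.of_forall key)
  have hval_int : ∫ x, RHS x = (N:ℝ) * (((N:ℝ)⁻¹) ^ s * C6) := by
    rw [hRHS]
    rw [integral_finset_sum _ hRHS_int_term]
    have hterm : ∀ k ∈ Finset.range N,
        ∫ x, (Qb h l k' z' (k + 1)).indicator
            (fun _ => ((N:ℝ)⁻¹ * (C3 * 4 ^ (k + 1))) ^ s) x
          = ((N:ℝ)⁻¹) ^ s * C6 := by
      intro k _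
      rw [integral_indicator_const _ (measurableSet_Qb h l k' z' (k + 1)), smul_eq_mul,
        measureReal_def, vol_Qb h l k' z' (k + 1)]
      have h40 : ((4:ℝ) ^ ((k + 1) * (h + l * (k' + 1)))) ≠ 0 := by positivity
      rw [hC6, mul_pow, mul_pow, ← pow_mul, ← hs]
      field_simp
    rw [Finset.sum_congr rfl hterm, Finset.sum_const, Finset.card_range, nsmul_eq_mul]
  have hpow : ((N:ℝ)⁻¹) ^ s ≤ ((N:ℝ)⁻¹) ^ 2 := pow_le_pow_of_le_one hNi0 hNi1 hs2
  have hfin : (N:ℝ) * (((N:ℝ)⁻¹) ^ s * C6) ≤ C6 / N := by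
    have h1 : (N:ℝ) * (((N:ℝ)⁻¹) ^ s * C6) ≤ (N:ℝ) * (((N:ℝ)⁻¹) ^ 2 * C6) :=
      mul_le_mul_of_nonneg_left (mul_le_mul_of_nonneg_right hpow hC60) hNpos.le
    have h2 : (N:ℝ) * (((N:ℝ)⁻¹) ^ 2 * C6) = C6 / N := by
      field_simp
    linarith
  have hlast : C6 / N < ε := by
    rw [div_lt_iff₀ hNpos]
    rw [div_lt_iff₀ hε] at hNC6
    linarith
  refine ⟨ψ, htest, hval.ge, ?_⟩
  calc ∫ x, (XgradNorm (grushinVF h l k') ψ x) ^ ((s : ℕ) : ℝ)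
      = ∫ x, (XgradNorm (grushinVF h l k') ψ x) ^ s := by
        simp_rw [Real.rpow_natCast]
    _ ≤ ∫ x, RHS x := hint
    _ = (N:ℝ) * (((N:ℝ)⁻¹) ^ s * C6) := hval_int
    _ ≤ C6 / N := hfin
    _ < ε := hlast
end

section
/- Let N be a positive integer, α > 0, and β₁,…,β_N real numbers with 0 ≤ β_i < α for each i. Then there exists a constant C > 0, depending only on N, α and the β_i, such that for all nonnegative real numbers α₁,…,α_N and every nonnegative real number z satisfying z^α ≤ ∑_{i=1}^N α_i·z^{β_i}, one has z ≤ C·∑_{i=1}^N α_i^{1/(α−β_i)}. -/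
open Finset

/-- **Algebraic iteration lemma** (Lemma 2.7): if `z ≥ 0` satisfies
`z^α ≤ ∑ i, αᵢ z^{βᵢ}` with `0 ≤ βᵢ < α`, then `z ≤ C ∑ i, αᵢ^{1/(α-βᵢ)}`,
with `C` depending only on `N`, `α` and the `βᵢ`. -/
theorem iteration_lemma
    (N : ℕ) (hN : 0 < N) (α : ℝ) (hα : 0 < α)
    (β : Fin N → ℝ) (hβ : ∀ i, 0 ≤ β i ∧ β i < α) :
    ∃ C > (0:ℝ), ∀ a : Fin N → ℝ, (∀ i, 0 ≤ a i) →
      ∀ z : ℝ, 0 ≤ z → z ^ α ≤ ∑ i, a i * z ^ (β i) →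
        z ≤ C * ∑ i, (a i) ^ (1 / (α - β i)) := by
  haveI : Nonempty (Fin N) := Fin.pos_iff_nonempty.mp hN
  have huniv : (Finset.univ : Finset (Fin N)).Nonempty := Finset.univ_nonempty
  have hN' : (0:ℝ) < N := by exact_mod_cast hN
  set C : ℝ := Finset.univ.sup' huniv (fun i => (N:ℝ) ^ (1/(α - β i))) with hC
  have hCpos : 0 < C := by
    obtain ⟨i⟩ := ‹Nonempty (Fin N)›
    exact lt_of_lt_of_le (Real.rpow_pos_of_pos hN' (1/(α - β i)))
      (Finset.le_sup' (fun j => (N:ℝ) ^ (1/(α - β j))) (Finset.mem_univ i))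
  refine ⟨C, hCpos, ?_⟩
  intro a ha z hz hle
  have hsum : 0 ≤ ∑ i, (a i) ^ (1 / (α - β i)) :=
    Finset.sum_nonneg fun i _ => Real.rpow_nonneg (ha i) _
  rcases eq_or_lt_of_le hz with rfl | hz'
  · exact mul_nonneg hCpos.le hsum
  obtain ⟨i, hi⟩ : ∃ i, z ^ α / N ≤ a i * z ^ β i := by
    by_contra h
    push_neg at h
    have hlt : ∑ i, a i * z ^ β i < ∑ _i : Fin N, z ^ α / N :=
      Finset.sum_lt_sum_of_nonempty huniv (fun i _ => h i)
    rw [Finset.sum_const, Finset.card_univ, Fintype.card_fin, nsmul_eq_mul,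
      mul_div_cancel₀ _ hN'.ne'] at hlt
    linarith
  have hαβ : 0 < α - β i := sub_pos.mpr (hβ i).2
  have hzb : 0 < z ^ β i := Real.rpow_pos_of_pos hz' _
  have key : z ^ (α - β i) ≤ (N:ℝ) * a i := by
    have h1 : z ^ α ≤ (N:ℝ) * (a i * z ^ β i) := by
      calc z ^ α = (N:ℝ) * (z ^ α / N) := by field_simp
        _ ≤ (N:ℝ) * (a i * z ^ β i) := by nlinarith
    have h2 : z ^ (α - β i) * z ^ β i = z ^ α := by
      rw [← Real.rpow_add hz', sub_add_cancel]
    have h3 : z ^ (α - β i) * z ^ β i ≤ ((N:ℝ) * a i) * z ^ β i := by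
      rw [h2, mul_assoc]; exact h1
    exact le_of_mul_le_mul_right h3 hzb
  have hz2 : z ≤ ((N:ℝ) * a i) ^ (1/(α - β i)) := by
    have := Real.rpow_le_rpow (Real.rpow_nonneg hz _) key
      (le_of_lt (one_div_pos.mpr hαβ))
    rwa [← Real.rpow_mul hz, mul_one_div_cancel hαβ.ne', Real.rpow_one] at this
  have hz3 : ((N:ℝ) * a i) ^ (1/(α - β i))
      = (N:ℝ) ^ (1/(α - β i)) * (a i) ^ (1/(α - β i)) :=
    Real.mul_rpow hN'.le (ha i)
  have hNC : (N:ℝ) ^ (1/(α - β i)) ≤ C :=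
    Finset.le_sup' (fun j => (N:ℝ) ^ (1/(α - β j))) (Finset.mem_univ i)
  have hai : (a i) ^ (1/(α - β i)) ≤ ∑ j, (a j) ^ (1 / (α - β j)) :=
    Finset.single_le_sum (f := fun j => (a j) ^ (1 / (α - β j)))
      (fun j _ => Real.rpow_nonneg (ha j) _) (Finset.mem_univ i)
  calc z ≤ (N:ℝ) ^ (1/(α - β i)) * (a i) ^ (1/(α - β i)) := by rw [← hz3]; exact hz2
    _ ≤ C * (a i) ^ (1/(α - β i)) :=
        mul_le_mul_of_nonneg_right hNC (Real.rpow_nonneg (ha i) _)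
    _ ≤ C * ∑ j, (a j) ^ (1 / (α - β j)) :=
        mul_le_mul_of_nonneg_left hai hCpos.le
end
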